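/- arXiv:math/0105073 — 2 statements merged into one kernel-verified Lean document; each statement's English description precedes it below -/
import Mathlib

section
/- Let ρ ∈ S_s be a kernel permutation, let π ∈ S(ρ), and let 1 ≤ l < l′ ≤ s+1 and 1 ≤ m ≤ s. Then for any entries a ∈ C_{ml}(π) and b ∈ C_{ml′}(π) one has a > b. -/
namespace Paper132

/-- `t = (i,j,k)` is an occurrence of the pattern 132 in `π`. -/
def IsOcc132 {n : ℕ} (π : Equiv.Perm (Fin n)) (t : Fin n × Fin n × Fin n) : Prop :=
  t.1 < t.2.1 ∧ t.2.1 < t.2.2 ∧ π t.1 < π t.2.2 ∧ π t.2.2 < π t.2.1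

/-- The number of occurrences of 132 in `π`. -/
noncomputable def occCount {n : ℕ} (π : Equiv.Perm (Fin n)) : ℕ :=
  Nat.card {t : Fin n × Fin n × Fin n // IsOcc132 π t}

/-- `ψ_r(n)`: the number of permutations of length `n` with exactly `r` occurrences of 132. -/
noncomputable def psi (r n : ℕ) : ℕ :=
  Nat.card {π : Equiv.Perm (Fin n) // occCount π = r}

/-- The type of occurrences of 132 in `π`. -/
def Occ132 {n : ℕ} (π : Equiv.Perm (Fin n)) : Type :=
  {t : Fin n × Fin n × Fin n // IsOcc132 π t}

/-- The bipartite graph `G_π` on positions and occurrences. -/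
def patternGraph {n : ℕ} (π : Equiv.Perm (Fin n)) :
    SimpleGraph (Fin n ⊕ Occ132 π) :=
  SimpleGraph.fromRel fun v w =>
    ∃ (i : Fin n) (o : Occ132 π),
      v = Sum.inl i ∧ w = Sum.inr o ∧
        (i = o.1.1 ∨ i = o.1.2.1 ∨ i = o.1.2.2)

/-- The position of the maximal entry. -/
def maxPos {n : ℕ} (π : Equiv.Perm (Fin (n + 1))) : Fin (n + 1) :=
  π.symm (Fin.last n)

/-- The set of kernel positions: positions in the connected component of `G_π`
containing the position of the maximal entry. -/
def kernelSet {n : ℕ} (π : Equiv.Perm (Fin (n + 1))) : Set (Fin (n + 1)) :=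
  {i | (patternGraph π).Reachable (Sum.inl i) (Sum.inl (maxPos π))}

noncomputable def kernelFinset {n : ℕ} (π : Equiv.Perm (Fin (n + 1))) : Finset (Fin (n + 1)) :=
  (kernelSet π).toFinite.toFinset

/-- The size of the kernel of `π`. -/
noncomputable def kernelSize {n : ℕ} (π : Equiv.Perm (Fin (n + 1))) : ℕ :=
  (kernelFinset π).card

/-- `kpos π hs k` is the kernel position `i_{k+1}` (0-indexed `k`). -/
noncomputable def kpos {n s : ℕ} (π : Equiv.Perm (Fin (n + 1)))
    (hs : (kernelFinset π).card = s) (k : Fin s) : Fin (n + 1) :=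
  ((kernelFinset π).orderIsoOfFin hs k).1

/-- `π` has kernel shape `ρ`: the kernel entries of `π`, read in increasing order of
positions, are order-isomorphic to `ρ`. -/
def ShapeCond {n s : ℕ} (π : Equiv.Perm (Fin (n + 1))) (ρ : Equiv.Perm (Fin s))
    (hs : (kernelFinset π).card = s) : Prop :=
  ∀ a b : Fin s, ρ a < ρ b ↔ π (kpos π hs a) < π (kpos π hs b)

/-- `π ∈ S(ρ)`: the kernel shape of `π` equals `ρ`. -/
def InShapeClass {n s : ℕ} (π : Equiv.Perm (Fin (n + 1))) (ρ : Equiv.Perm (Fin s)) : Prop :=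
  ∃ hs : (kernelFinset π).card = s, ShapeCond π ρ hs

/-- `ρ` is a kernel permutation: it is the kernel shape of some permutation. -/
def IsKernelPerm {s : ℕ} (ρ : Equiv.Perm (Fin s)) : Prop :=
  ∃ (n : ℕ) (π : Equiv.Perm (Fin (n + 1))), InShapeClass π ρ

/-- The cell `C_{m l}(π)` (with `m`, `l` 1-indexed, `1 ≤ m ≤ s`, `1 ≤ l ≤ s+1`,
as in the paper), as a set of entries (values) of `π`: it consists of those values `π j`
with `i_{l-1} < j < i_l` and `v_{m-1} < π j < v_m`, where `i_1 < … < i_s` are the kernel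
positions (`i_0`, `i_{s+1}` are sentinels imposing no restriction) and
`v_m = π(i_{ρ⁻¹(m)})` (`v_0` a sentinel imposing no restriction). -/
def cellSet {n s : ℕ} (π : Equiv.Perm (Fin (n + 1))) (ρ : Equiv.Perm (Fin s))
    (hs : (kernelFinset π).card = s) (m l : ℕ) : Set (Fin (n + 1)) :=
  {v | ∃ j : Fin (n + 1), π j = v ∧
    (∀ (h₁ : 2 ≤ l) (h₂ : l ≤ s + 1), kpos π hs ⟨l - 2, by omega⟩ < j) ∧
    (∀ (h₁ : 1 ≤ l) (h₂ : l ≤ s), j < kpos π hs ⟨l - 1, by omega⟩) ∧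
    (∀ (h₁ : 2 ≤ m) (h₂ : m ≤ s), π (kpos π hs (ρ.symm ⟨m - 2, by omega⟩)) < π j) ∧
    (∀ (h₁ : 1 ≤ m) (h₂ : m ≤ s), π j < π (kpos π hs (ρ.symm ⟨m - 1, by omega⟩)))}

/-- `(m, l)` is a feasible cell of the kernel permutation `ρ`:
`C_{m l}(π)` is nonempty for at least one `π ∈ S(ρ)`. -/
def Feasible {s : ℕ} (ρ : Equiv.Perm (Fin s)) (m l : ℕ) : Prop :=
  1 ≤ m ∧ m ≤ s ∧ 1 ≤ l ∧ l ≤ s + 1 ∧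
    ∃ (n : ℕ) (π : Equiv.Perm (Fin (n + 1))) (hs : (kernelFinset π).card = s),
      ShapeCond π ρ hs ∧ (cellSet π ρ hs m l).Nonempty

/-- `f(ρ)`: the number of feasible cells of `ρ`. -/
noncomputable def numFeasible {s : ℕ} (ρ : Equiv.Perm (Fin s)) : ℕ :=
  Nat.card {p : ℕ × ℕ // Feasible ρ p.1 p.2}

/-- `Ψ_r(x) = Σ_n ψ_r(n) xⁿ ∈ ℚ[[x]]`. -/
noncomputable def PsiGF (r : ℕ) : PowerSeries ℚ :=
  PowerSeries.mk fun n => (psi r n : ℚ)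


/-- Auxiliary: a position belonging to an occurrence is adjacent to it in `G_π`. -/
lemma adj_occ {n : ℕ} (π : Equiv.Perm (Fin n)) (o : Occ132 π) (i : Fin n)
    (h : i = o.1.1 ∨ i = o.1.2.1 ∨ i = o.1.2.2) :
    (patternGraph π).Adj (Sum.inl i) (Sum.inr o) := by
  simp only [patternGraph, SimpleGraph.fromRel_adj]
  exact ⟨by simp, Or.inl ⟨i, o, rfl, rfl, h⟩⟩

/-- Auxiliary: two positions in a common occurrence are connected; transfer reachability. -/
lemma occ_link {n : ℕ} (π : Equiv.Perm (Fin (n + 1))) (i j k : Fin (n + 1))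
    (hocc : IsOcc132 π (i, j, k)) (u w : Fin (n + 1))
    (hu : u = i ∨ u = j ∨ u = k) (hw : w = i ∨ w = j ∨ w = k)
    (h : (patternGraph π).Reachable (Sum.inl u) (Sum.inl (maxPos π))) :
    (patternGraph π).Reachable (Sum.inl w) (Sum.inl (maxPos π)) := by
  have hadjw := adj_occ π ⟨(i, j, k), hocc⟩ w hw
  have hadju := adj_occ π ⟨(i, j, k), hocc⟩ u hu
  exact hadjw.reachable.trans (hadju.reachable.symm.trans h)

/-- The key lemma: if `q` is a kernel position and `v > q` is a position with `π v > π q`,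
then `v` is a kernel position as well. Proved by induction on the length of a walk
from `q` to the position of the maximal entry. -/
lemma key {n : ℕ} (π : Equiv.Perm (Fin (n + 1))) :
    ∀ (L : ℕ) (q v : Fin (n + 1))
      (W : (patternGraph π).Walk (Sum.inl q) (Sum.inl (maxPos π))),
      W.length ≤ L → q < v → π q < π v →
      (patternGraph π).Reachable (Sum.inl v) (Sum.inl (maxPos π)) := by
  intro L
  induction L with
  | zero =>
    intro q v W hWL hqv hπqv
    have h0 : (Sum.inl q : Fin (n + 1) ⊕ Occ132 π) = Sum.inl (maxPos π) :=
      W.eq_of_length_eq_zero (Nat.le_zero.mp hWL)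
    have hq : q = maxPos π := Sum.inl.inj h0
    subst hq
    have : π (maxPos π) = Fin.last n := π.apply_symm_apply _
    rw [this] at hπqv
    exact absurd hπqv (not_lt.2 (Fin.le_last _))
  | succ L IH =>
    intro q v W hWL hqv hπqv
    by_cases hqM : q = maxPos π
    · subst hqM
      have : π (maxPos π) = Fin.last n := π.apply_symm_apply _
      rw [this] at hπqv
      exact absurd hπqv (not_lt.2 (Fin.le_last _))
    -- decompose the walk: first step to an occurrence `o` containing `q`
    obtain ⟨c, h₁, W₁, hW⟩ := W.exists_eq_cons_of_ne (fun h => hqM (Sum.inl.inj h))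
    simp only [patternGraph, SimpleGraph.fromRel_adj] at h₁
    rcases h₁.2 with ⟨i, o, hqi, rfl, qmem⟩ | ⟨i, o, hci, habs⟩
    swap
    · exact absurd habs (by simp)
    obtain rfl := Sum.inl.inj hqi
    -- second step from the occurrence to a position `t` of it
    obtain ⟨c₂, h₂, W₂, hW₁⟩ := W₁.exists_eq_cons_of_ne (by simp)
    have h₂' := h₂
    simp only [patternGraph, SimpleGraph.fromRel_adj] at h₂'
    rcases h₂'.2 with ⟨i', o', habs, _⟩ | ⟨t, o', hc₂, hoo, tmem⟩
    · exact absurd habs (by simp)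
    obtain rfl := Sum.inr.inj hoo
    subst hc₂
    -- length bookkeeping
    have hlen : W₂.length ≤ L := by
      have : W.length = W₂.length + 2 := by
        rw [hW, hW₁]; simp [SimpleGraph.Walk.length_cons]
      omega
    -- reachability of occurrence members
    have hRo : (patternGraph π).Reachable (Sum.inr o) (Sum.inl (maxPos π)) :=
      h₂.reachable.trans ⟨W₂⟩
    have hR : ∀ u : Fin (n + 1), (u = o.1.1 ∨ u = o.1.2.1 ∨ u = o.1.2.2) →
        (patternGraph π).Reachable (Sum.inl u) (Sum.inl (maxPos π)) :=
      fun u hu => (adj_occ π o u hu).reachable.trans hRo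
    have hRv' := hR
    obtain ⟨⟨x, y, z⟩, hxy, hyz, hxz, hzy⟩ := o
    simp only at qmem tmem hR hxy hyz hxz hzy
    -- now the case analysis
    rcases lt_trichotomy t v with htv | rfl | hvt
    · -- t < v
      rcases lt_trichotomy (π t) (π v) with hπ | heq | hπ'
      · exact IH t v W₂ hlen htv hπ
      · exact absurd (π.injective heq) (ne_of_lt htv)
      · -- π v < π t
        rcases lt_trichotomy q t with hqt | rfl | htq
        · exact occ_link π q t v ⟨hqt, htv, hπqv, hπ'⟩ t v
            (Or.inr (Or.inl rfl)) (Or.inr (Or.inr rfl)) (hR t tmem)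
        · exact absurd (hπqv.trans hπ') (lt_irrefl _)
        · -- t < q: role elimination forces t = y, q = z
          have hπqt : π q < π t := hπqv.trans hπ'
          rcases qmem with rfl | rfl | rfl
          · rcases tmem with rfl | rfl | rfl
            · exact absurd htq (lt_irrefl _)
            · exact absurd (htq.trans hxy) (lt_irrefl _)
            · exact absurd (htq.trans (hxy.trans hyz)) (lt_irrefl _)
          · rcases tmem with rfl | rfl | rfl
            · exact absurd (hπqt.trans (hxz.trans hzy)) (lt_irrefl _)
            · exact absurd htq (lt_irrefl _)
            · exact absurd (htq.trans hyz) (lt_irrefl _)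
          · rcases tmem with rfl | rfl | rfl
            · exact absurd (hxz.trans hπqt) (lt_irrefl _)
            · -- t = y, q = z : occurrence (x, y, v)
              exact occ_link π x t v ⟨hxy, htv, hxz.trans hπqv, hπ'⟩ t v
                (Or.inr (Or.inl rfl)) (Or.inr (Or.inr rfl)) (hR t (Or.inr (Or.inl rfl)))
            · exact absurd htq (lt_irrefl _)
    · -- t = v
      exact hR t tmem
    · -- v < t : straddle case, in particular v < z
      have hvz : v < z := by
        rcases tmem with rfl | rfl | rfl
        · exact hvt.trans (hxy.trans hyz)
        · exact hvt.trans hyz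
        · exact hvt
      have hxv : x < v := by
        rcases qmem with rfl | rfl | rfl
        · exact hqv
        · exact hxy.trans hqv
        · exact absurd (hqv.trans hvz) (lt_irrefl _)
      rcases lt_trichotomy (π z) (π v) with h1 | heq | h2
      · exact occ_link π x v z ⟨hxv, hvz, hxz, h1⟩ z v
          (Or.inr (Or.inr rfl)) (Or.inr (Or.inl rfl)) (hR z (Or.inr (Or.inr rfl)))
      · exact absurd (π.injective heq) (ne_of_gt hvz)
      · -- π v < π z
        rcases lt_trichotomy v y with hvy | rfl | hyv
        · exact occ_link π v y z ⟨hvy, hyz, h2, hzy⟩ z v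
            (Or.inr (Or.inr rfl)) (Or.inl rfl) (hR z (Or.inr (Or.inr rfl)))
        · exact hR v (Or.inr (Or.inl rfl))
        · -- y < v : q must be x
          rcases qmem with rfl | rfl | rfl
          · exact occ_link π q y v ⟨hxy, hyv, hπqv, h2.trans hzy⟩ y v
              (Or.inr (Or.inl rfl)) (Or.inr (Or.inr rfl)) (hR y (Or.inr (Or.inl rfl)))
          · exact absurd (hπqv.trans (h2.trans hzy)) (lt_irrefl _)
          · exact absurd (hqv.trans hvz) (lt_irrefl _)

/-- kpos is strictly monotone. -/
lemma kpos_lt_kpos {n s : ℕ} (π : Equiv.Perm (Fin (n + 1)))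
    (hs : (kernelFinset π).card = s) {a b : Fin s} :
    kpos π hs a < kpos π hs b ↔ a < b := by
  rw [kpos, kpos]
  exact Iff.trans Subtype.coe_lt_coe (((kernelFinset π).orderIsoOfFin hs).lt_iff_lt)

lemma kpos_le_kpos {n s : ℕ} (π : Equiv.Perm (Fin (n + 1)))
    (hs : (kernelFinset π).card = s) {a b : Fin s} :
    kpos π hs a ≤ kpos π hs b ↔ a ≤ b := by
  rw [kpos, kpos]
  exact Iff.trans Subtype.coe_le_coe (((kernelFinset π).orderIsoOfFin hs).le_iff_le)

lemma kpos_mem {n s : ℕ} (π : Equiv.Perm (Fin (n + 1)))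
    (hs : (kernelFinset π).card = s) (a : Fin s) :
    (patternGraph π).Reachable (Sum.inl (kpos π hs a)) (Sum.inl (maxPos π)) := by
  have h : kpos π hs a ∈ kernelFinset π := ((kernelFinset π).orderIsoOfFin hs a).2
  rw [kernelFinset, Set.Finite.mem_toFinset] at h
  exact h

/-- A position strictly between consecutive kernel positions is not in the kernel. -/
lemma not_kernel_of_between {n s : ℕ} (π : Equiv.Perm (Fin (n + 1)))
    (hs : (kernelFinset π).card = s) (j : Fin (n + 1)) (l : ℕ) (hl1 : 1 ≤ l) (hl2 : l ≤ s + 1)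
    (hlow : ∀ (h₁ : 2 ≤ l) (h₂ : l ≤ s + 1), kpos π hs ⟨l - 2, by omega⟩ < j)
    (hhigh : ∀ (h₁ : 1 ≤ l) (h₂ : l ≤ s), j < kpos π hs ⟨l - 1, by omega⟩) :
    ¬ (patternGraph π).Reachable (Sum.inl j) (Sum.inl (maxPos π)) := by
  intro hreach
  have hmem : j ∈ kernelFinset π := (Set.Finite.mem_toFinset _).2 hreach
  obtain ⟨k, hk⟩ := ((kernelFinset π).orderIsoOfFin hs).surjective ⟨j, hmem⟩
  have hkj : kpos π hs k = j := congrArg Subtype.val hk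
  have hks : (k : ℕ) < s := k.2
  by_cases hls : l ≤ s
  · have h1 : k < (⟨l - 1, by omega⟩ : Fin s) := by
      rw [← kpos_lt_kpos π hs, hkj]; exact hhigh hl1 hls
    have h1' : (k : ℕ) < l - 1 := h1
    have hl2' : 2 ≤ l := by
      rcases Nat.lt_or_ge l 2 with h | h
      · omega
      · exact h
    have h2 : (⟨l - 2, by omega⟩ : Fin s) < k := by
      rw [← kpos_lt_kpos π hs, hkj]; exact hlow hl2' hl2
    have h2' : l - 2 < (k : ℕ) := h2
    omega
  · have hl' : l = s + 1 := by omega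
    have h2 : (⟨l - 2, by omega⟩ : Fin s) < k := by
      rw [← kpos_lt_kpos π hs, hkj]; exact hlow (by omega) hl2
    have h2' : l - 2 < (k : ℕ) := h2
    omega


/-- Lemma 4: let `ρ ∈ S_s` be a kernel permutation, `π ∈ S(ρ)`, and let
`1 ≤ l < l' ≤ s + 1` and `1 ≤ m ≤ s`. Then for any entries `a ∈ C_{m l}(π)` and
`b ∈ C_{m l'}(π)` one has `a > b`. -/
theorem cell_entries_decrease_horizontally (s : ℕ) (ρ : Equiv.Perm (Fin s))
    (hρ : IsKernelPerm ρ)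
    (n : ℕ) (π : Equiv.Perm (Fin (n + 1))) (hs : (kernelFinset π).card = s)
    (hπ : ShapeCond π ρ hs)
    (m l l' : ℕ) (hm1 : 1 ≤ m) (hms : m ≤ s) (hl1 : 1 ≤ l) (hll : l < l')
    (hl's : l' ≤ s + 1)
    (a b : Fin (n + 1)) (ha : a ∈ cellSet π ρ hs m l) (hb : b ∈ cellSet π ρ hs m l') :
    b < a := by
  obtain ⟨ja, rfl, hjal, hjah, -, -⟩ := ha
  obtain ⟨jb, rfl, hjbl, hjbh, -, -⟩ := hb
  have hls : l ≤ s := by omega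
  have hl'2 : 2 ≤ l' := by omega
  set q : Fin (n + 1) := kpos π hs ⟨l - 1, by omega⟩ with hqdef
  have h1 : ja < q := hjah hl1 hls
  have h2 : q ≤ kpos π hs ⟨l' - 2, by omega⟩ := by
    exact (kpos_le_kpos π hs).2 (Fin.mk_le_mk.mpr (by omega))
  have h3 : q < jb := lt_of_le_of_lt h2 (hjbl hl'2 hl's)
  have hqK : (patternGraph π).Reachable (Sum.inl q) (Sum.inl (maxPos π)) :=
    kpos_mem π hs _
  have hjaK : ¬ (patternGraph π).Reachable (Sum.inl ja) (Sum.inl (maxPos π)) :=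
    not_kernel_of_between π hs ja l hl1 (by omega) hjal hjah
  have hjbK : ¬ (patternGraph π).Reachable (Sum.inl jb) (Sum.inl (maxPos π)) :=
    not_kernel_of_between π hs jb l' (by omega) hl's hjbl hjbh
  -- now show π jb < π ja
  by_contra hab
  have hab' : π ja < π jb := by
    rcases lt_trichotomy (π ja) (π jb) with h | h | h
    · exact h
    · exact absurd (π.injective h) (ne_of_lt (h1.trans h3))
    · exact absurd h hab
  have hπjbq : π jb < π q := by
    rcases lt_trichotomy (π jb) (π q) with h | h | h
    · exact h
    · exact absurd (π.injective h) (ne_of_gt h3)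
    · obtain ⟨W⟩ := hqK
      exact absurd (key π W.length q jb W le_rfl h3 h) hjbK
  exact hjaK (occ_link π ja q jb ⟨h1, h3, hab', hπjbq⟩ q ja
    (Or.inr (Or.inl rfl)) (Or.inl rfl) hqK)


end Paper132
end

section
/- Let ρ ∈ S_s be a kernel permutation, let π ∈ S(ρ), and let 1 ≤ m < m′ ≤ s and 1 ≤ l ≤ s+1. Then for any positions j, j′ with π(j) ∈ C_{ml}(π) and π(j′) ∈ C_{m′l}(π) one has j > j′, i.e., every entry of C_{ml}(π) lies to the right of every entry of C_{m′l}(π). -/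
namespace Paper132

lemma kpos_lt_iff {n s : ℕ} (π : Equiv.Perm (Fin (n + 1)))
    (hs : (kernelFinset π).card = s) {u v : Fin s} :
    kpos π hs u < kpos π hs v ↔ u < v := by
  rw [kpos, kpos, Subtype.coe_lt_coe]
  exact OrderIso.lt_iff_lt _

variable {n : ℕ} (π : Equiv.Perm (Fin n))

lemma adj_inl_inr (o : Occ132 π) (x : Fin n)
    (hx : x = o.1.1 ∨ x = o.1.2.1 ∨ x = o.1.2.2) :
    (patternGraph π).Adj (Sum.inl x) (Sum.inr o) := by
  simp only [patternGraph, SimpleGraph.fromRel_adj]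
  exact ⟨by simp, Or.inl ⟨x, o, rfl, rfl, hx⟩⟩

lemma adj_inl_elim {v : Fin n ⊕ Occ132 π} {x : Fin n}
    (h : (patternGraph π).Adj (Sum.inl x) v) :
    ∃ o : Occ132 π, v = Sum.inr o ∧ (x = o.1.1 ∨ x = o.1.2.1 ∨ x = o.1.2.2) := by
  simp only [patternGraph, SimpleGraph.fromRel_adj] at h
  obtain ⟨-, h | h⟩ := h
  · obtain ⟨i, o, hi, hv, hm⟩ := h
    rw [Sum.inl.injEq] at hi
    exact ⟨o, hv, hi ▸ hm⟩
  · obtain ⟨i, o, hi, hv, hm⟩ := h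
    exact absurd hv (by simp)

lemma adj_inr_elim {v : Fin n ⊕ Occ132 π} {o : Occ132 π}
    (h : (patternGraph π).Adj (Sum.inr o) v) :
    ∃ x : Fin n, v = Sum.inl x ∧ (x = o.1.1 ∨ x = o.1.2.1 ∨ x = o.1.2.2) := by
  simp only [patternGraph, SimpleGraph.fromRel_adj] at h
  obtain ⟨-, h | h⟩ := h
  · obtain ⟨i, o', hi, hv, hm⟩ := h
    exact absurd hi (by simp)
  · obtain ⟨i, o', hi, hv, hm⟩ := h
    rw [Sum.inr.injEq] at hv
    exact ⟨i, hi, hv ▸ hm⟩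

lemma reach_of_occ {t : Fin n × Fin n × Fin n} (ht : IsOcc132 π t)
    {j x : Fin n} {v : Fin n ⊕ Occ132 π}
    (hj : j = t.1 ∨ j = t.2.1 ∨ j = t.2.2)
    (hx : x = t.1 ∨ x = t.2.1 ∨ x = t.2.2)
    (h : (patternGraph π).Reachable (Sum.inl x) v) :
    (patternGraph π).Reachable (Sum.inl j) v :=
  ((adj_inl_inr π ⟨t, ht⟩ j hj).reachable.trans
    (adj_inl_inr π ⟨t, ht⟩ x hx).symm.reachable).trans h

lemma claimG_aux {n : ℕ} (π : Equiv.Perm (Fin (n + 1))) :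
    ∀ (k : ℕ) (q j : Fin (n + 1)), q < j → π q < π j →
      ∀ w : (patternGraph π).Walk (Sum.inl q) (Sum.inl (maxPos π)), w.length ≤ k →
        (patternGraph π).Reachable (Sum.inl j) (Sum.inl (maxPos π)) := by
  intro k
  induction k using Nat.strong_induction_on with
  | _ k IH =>
  intro q j hqj hv w hlen
  cases w with
  | nil =>
      rw [maxPos, Equiv.apply_symm_apply] at hv
      exact absurd hv (not_lt.mpr (Fin.le_last _))
  | cons hadj w' =>
      obtain ⟨o, rfl, hmem⟩ := adj_inl_elim π hadj
      cases w' with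
      | cons hadj2 w'' =>
        obtain ⟨q₂, rfl, hmem2⟩ := adj_inr_elim π hadj2
        obtain ⟨⟨a, b, c⟩, hocc⟩ := o
        have hker : ∀ x : Fin (n+1), (x = a ∨ x = b ∨ x = c) →
            (patternGraph π).Reachable (Sum.inl x) (Sum.inl (maxPos π)) :=
          fun x hx => ⟨SimpleGraph.Walk.cons
            (adj_inl_inr π ⟨(a, b, c), hocc⟩ x hx)
            (SimpleGraph.Walk.cons hadj2 w'')⟩
        obtain ⟨h1, h2, h3, h4⟩ := hocc
        have hmem : q = a ∨ q = b ∨ q = c := hmem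
        have hmem2 : q₂ = a ∨ q₂ = b ∨ q₂ = c := hmem2
        have hocc' : IsOcc132 π (a, b, c) := ⟨h1, h2, h3, h4⟩
        rcases lt_trichotomy (π b) (π j) with hbj | hbj | hbj
        · -- π b < π j
          rcases lt_trichotomy j c with hjc | hjc | hjc
          · -- j < c : occurrence (a, j, c)
            have haq : a ≤ q := by
              rcases hmem with h | h | h <;> rw [h]
              exacts [h1.le, (h1.trans h2).le]
            exact reach_of_occ π (t := (a, j, c))
              ⟨lt_of_le_of_lt haq hqj, hjc, h3, h4.trans hbj⟩
              (Or.inr (Or.inl rfl)) (Or.inl rfl) (hker _ (Or.inl rfl))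
          · exact hker j (Or.inr (Or.inr hjc))
          · -- c < j : IH at q₂
            have hlen'' : w''.length < k := by
              simp only [SimpleGraph.Walk.length_cons] at hlen; omega
            have hq₂c : q₂ ≤ c := by
              rcases hmem2 with h | h | h <;> rw [h]
              exacts [(h1.trans h2).le, h2.le]
            have hq₂v : π q₂ ≤ π b := by
              rcases hmem2 with h | h | h <;> rw [h]
              exacts [(h3.trans h4).le, h4.le]
            exact IH w''.length hlen'' q₂ j (lt_of_le_of_lt hq₂c hjc)
              (lt_of_le_of_lt hq₂v hbj) w'' le_rfl
        · -- π b = π j, so j = b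
          exact hker j (Or.inr (Or.inl (π.injective hbj).symm))
        · -- π j < π b
          rcases lt_trichotomy j b with hjb | hjb | hjb
          · -- j < b : q must be a
            have hqa : q = a := by
              rcases hmem with h | h | h
              · exact h
              · exact absurd (hqj.trans hjb) (by rw [h]; exact lt_irrefl _)
              · exact absurd ((hqj.trans hjb).trans h2) (by rw [h]; exact lt_irrefl _)
            rw [hqa] at hqj hv
            rcases lt_trichotomy (π j) (π c) with hjc | hjc | hjc
            · -- occurrence (j, b, c)
              exact reach_of_occ π (t := (j, b, c))
                ⟨hjb, h2, hjc, h4⟩ (Or.inl rfl) (Or.inr (Or.inl rfl))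
                (hker _ (Or.inr (Or.inl rfl)))
            · exact ((hjb.trans h2).ne (π.injective hjc)).elim
            · -- occurrence (a, j, c)
              exact reach_of_occ π (t := (a, j, c))
                ⟨hqj, hjb.trans h2, h3, hjc⟩
                (Or.inr (Or.inl rfl)) (Or.inl rfl) (hker _ (Or.inl rfl))
          · exact hker j (Or.inr (Or.inl hjb))
          · -- b < j : occurrence (a, b, j)
            have hπaj : π a < π j := by
              rcases hmem with h | h | h <;> rw [h] at hv
              · exact hv
              · exact absurd hv (asymm hbj)
              · exact h3.trans hv
            exact reach_of_occ π (t := (a, b, j))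
              ⟨h1, hjb, hπaj, hbj⟩ (Or.inr (Or.inr rfl)) (Or.inl rfl)
              (hker _ (Or.inl rfl))

lemma claimG {n : ℕ} (π : Equiv.Perm (Fin (n + 1))) {q j : Fin (n + 1)}
    (hq : q ∈ kernelSet π) (hqj : q < j) (hv : π q < π j) : j ∈ kernelSet π := by
  obtain ⟨w⟩ := hq
  exact claimG_aux π w.length q j hqj hv w le_rfl


/-- Lemma 5: let `ρ ∈ S_s` be a kernel permutation, `π ∈ S(ρ)`, and let
`1 ≤ m < m' ≤ s` and `1 ≤ l ≤ s + 1`. Then every entry of `C_{m l}(π)` lies to the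
right of every entry of `C_{m' l}(π)`: if `π j ∈ C_{m l}(π)` and `π j' ∈ C_{m' l}(π)`,
then `j > j'`. -/
theorem cell_entries_rightward_vertically (s : ℕ) (ρ : Equiv.Perm (Fin s))
    (hρ : IsKernelPerm ρ)
    (n : ℕ) (π : Equiv.Perm (Fin (n + 1))) (hs : (kernelFinset π).card = s)
    (hπ : ShapeCond π ρ hs)
    (m m' l : ℕ) (hm1 : 1 ≤ m) (hmm : m < m') (hm's : m' ≤ s) (hl1 : 1 ≤ l)
    (hls : l ≤ s + 1)
    (j j' : Fin (n + 1)) (hj : π j ∈ cellSet π ρ hs m l) (hj' : π j' ∈ cellSet π ρ hs m' l) :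
    j' < j := by
  obtain ⟨j₀, hj₀, hLj, hRj, -, hUj⟩ := hj
  obtain rfl : j = j₀ := (π.injective hj₀).symm
  obtain ⟨j₁, hj₁, hLj', hRj', hDj', -⟩ := hj'
  obtain rfl : j' = j₁ := (π.injective hj₁).symm
  have hs2 : 2 ≤ s := by omega
  have hms : m ≤ s := by omega
  have hvm : π j < π (kpos π hs (ρ.symm ⟨m - 1, by omega⟩)) := hUj hm1 hms
  have hvm' : π (kpos π hs (ρ.symm ⟨m' - 2, by omega⟩)) < π j' := hDj' (by omega) hm's
  have hmono : π (kpos π hs (ρ.symm ⟨m - 1, by omega⟩)) ≤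
      π (kpos π hs (ρ.symm ⟨m' - 2, by omega⟩)) := by
    refine le_of_not_gt fun hcon => ?_
    have h2 := (hπ (ρ.symm ⟨m' - 2, by omega⟩) (ρ.symm ⟨m - 1, by omega⟩)).mpr hcon
    simp only [Equiv.apply_symm_apply, Fin.mk_lt_mk] at h2
    omega
  have hq'j' : π (kpos π hs (ρ.symm ⟨m - 1, by omega⟩)) < π j' := lt_of_le_of_lt hmono hvm'
  by_contra hcon
  push_neg at hcon
  have hjj' : j < j' := by
    rcases lt_or_eq_of_le hcon with h | h
    · exact h
    · rw [h] at hvm; exact absurd (hvm.trans hq'j') (lt_irrefl _)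
  -- j' is not a kernel position
  have hj'nk : j' ∉ kernelSet π := by
    intro hk
    have hkF : j' ∈ kernelFinset π := (Set.Finite.mem_toFinset _).2 hk
    obtain ⟨t, ht⟩ : ∃ t : Fin s, kpos π hs t = j' :=
      ⟨((kernelFinset π).orderIsoOfFin hs).symm ⟨j', hkF⟩, by
        rw [kpos, OrderIso.apply_symm_apply]⟩
    by_cases hls' : l ≤ s
    · have h2 := hRj' hl1 hls'
      rw [← ht] at h2
      have h2' : (t : ℕ) < l - 1 := (kpos_lt_iff π hs).1 h2
      rcases Nat.lt_or_ge l 2 with hl2 | hl2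
      · omega
      · have h1 := hLj' hl2 hls
        rw [← ht] at h1
        have h1' : l - 2 < (t : ℕ) := (kpos_lt_iff π hs).1 h1
        omega
    · have h1 := hLj' (by omega) hls
      rw [← ht] at h1
      have h1' : l - 2 < (t : ℕ) := (kpos_lt_iff π hs).1 h1
      have ht' := t.isLt
      omega
  -- the kernel position carrying the value v_m
  have hqk : kpos π hs (ρ.symm ⟨m - 1, by omega⟩) ∈ kernelSet π :=
    (Set.Finite.mem_toFinset _).1 (((kernelFinset π).orderIsoOfFin hs _).2)
  rcases lt_trichotomy (kpos π hs (ρ.symm ⟨m - 1, by omega⟩)) j' with hlt | heq | hgt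
  · exact hj'nk (claimG π hqk hlt hq'j')
  · rw [heq] at hq'j'; exact absurd hq'j' (lt_irrefl _)
  · exact hj'nk (reach_of_occ π
      (t := (j, j', kpos π hs (ρ.symm ⟨m - 1, by omega⟩)))
      ⟨hjj', hgt, hvm, hq'j'⟩
      (Or.inr (Or.inl rfl)) (Or.inr (Or.inr rfl)) hqk)

end Paper132
end
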